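/- arXiv:2503.02575 — 2 statements merged into one kernel-verified Lean document; each statement's English description precedes it below -/
import Mathlib

section
/- The function v*(x) = (1 + |x|^{(p−2)(a_c − a)})^{−2/(p−2)}, with a_c = (n−2)/2, a < a_c and p > 2, is a positive radially symmetric solution of the Euler–Lagrange equation −div(|x|^{−2a} ∇u) = C |x|^{−bp} u^{p−1} on ℝⁿ ∖ {0} for an appropriate positive constant C, where b = a + 1 − n(1/2 − 1/p) (the critical relation for the Caffarelli–Kohn–Nirenberg inequality with c = 1, r = q = 2). -/
/-!
With `t = |x|²`, `d = a_c − a`, `e = (p − 2)d/2` and `q = −2/(p − 2)`, the profile is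
`v = φ(t)` with `φ(t) = (1 + t^e)^q`, and the weighted gradient `|x|^{−2a} ∇v` is the radial
field `G(t) x` with `G = 2 t^{−a} φ'`, whose divergence is `n G + 2t G'`. Factoring out
`2qe t^m (1 + t^e)^{q−2}` with `m = e − 1 − a`, what remains is
`(n + 2m)(1 + t^e) + 2(q − 1)e t^e = pd (1 + t^e) − pd t^e = pd`, because `n + 2m = pd`
and `2(q − 1)e = −pd`. Since `2qe = −2d`, `t^m = |x|^{−bp}` and `(1 + t^e)^{q−2} = φ^{p−1}`,
this is the equation with `C = 2pd²`.
-/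

open MeasureTheory

/-- Partial derivative in the `i`-th coordinate direction. -/
noncomputable def pder {n : ℕ} (i : Fin n) (g : EuclideanSpace ℝ (Fin n) → ℝ)
    (x : EuclideanSpace ℝ (Fin n)) : ℝ :=
  fderiv ℝ g x (EuclideanSpace.single i 1)

theorem HasDerivAt.comp_norm_sq {F : Type*} [NormedAddCommGroup F] [InnerProductSpace ℝ F]
    {φ : ℝ → ℝ} {φ' : ℝ} {x : F} (hφ : HasDerivAt φ φ' (‖x‖ ^ 2)) :
    HasFDerivAt (fun y => φ (‖y‖ ^ 2)) (φ' • 2 • innerSL ℝ x) x :=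
  hφ.comp_hasFDerivAt x (hasStrictFDerivAt_norm_sq x).hasFDerivAt

theorem norm_rpow_eq_norm_sq_rpow {F : Type*} [SeminormedAddGroup F] (x : F) (r : ℝ) :
    ‖x‖ ^ r = (‖x‖ ^ 2) ^ (r / 2) := by
  rw [← Real.rpow_natCast_mul (norm_nonneg x)]
  push_cast
  ring_nf

section RadialCalculus

variable {n : ℕ}

theorem Filter.EventuallyEq.pder_eq {f g : EuclideanSpace ℝ (Fin n) → ℝ}
    {x : EuclideanSpace ℝ (Fin n)} (h : f =ᶠ[nhds x] g) (i : Fin n) :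
    pder i f x = pder i g x := by
  rw [pder, pder, h.fderiv_eq]

theorem HasFDerivAt.pder_eq {f : EuclideanSpace ℝ (Fin n) → ℝ}
    {f' : EuclideanSpace ℝ (Fin n) →L[ℝ] ℝ} {x : EuclideanSpace ℝ (Fin n)}
    (h : HasFDerivAt f f' x) (i : Fin n) : pder i f x = f' (EuclideanSpace.single i 1) := by
  rw [pder, h.fderiv]

theorem pder_comp_norm_sq {φ : ℝ → ℝ} {φ' : ℝ} {x : EuclideanSpace ℝ (Fin n)}
    (hφ : HasDerivAt φ φ' (‖x‖ ^ 2)) (i : Fin n) :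
    pder i (fun y => φ (‖y‖ ^ 2)) x = 2 * φ' * x i := by
  rw [hφ.comp_norm_sq.pder_eq]
  simp [EuclideanSpace.inner_single_right]
  ring

theorem pder_comp_norm_sq_mul_apply {G : ℝ → ℝ} {G' : ℝ} {x : EuclideanSpace ℝ (Fin n)}
    (hG : HasDerivAt G G' (‖x‖ ^ 2)) (i : Fin n) :
    pder i (fun y => G (‖y‖ ^ 2) * y i) x = G (‖x‖ ^ 2) + 2 * G' * x i ^ 2 := by
  have hproj : HasFDerivAt (fun y : EuclideanSpace ℝ (Fin n) => (y i : ℝ))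
      (EuclideanSpace.proj (𝕜 := ℝ) i) x :=
    (EuclideanSpace.proj (𝕜 := ℝ) i).hasFDerivAt
  rw [HasFDerivAt.pder_eq (f := fun y => G (‖y‖ ^ 2) * y i) (hG.comp_norm_sq.mul hproj)]
  simp [EuclideanSpace.inner_single_right]
  ring

theorem sum_pder_comp_norm_sq_mul_apply {G : ℝ → ℝ} {G' : ℝ} {x : EuclideanSpace ℝ (Fin n)}
    (hG : HasDerivAt G G' (‖x‖ ^ 2)) :
    ∑ i, pder i (fun y => G (‖y‖ ^ 2) * y i) x = n * G (‖x‖ ^ 2) + 2 * ‖x‖ ^ 2 * G' := by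
  rw [Finset.sum_congr rfl fun i _ => pder_comp_norm_sq_mul_apply hG i, Finset.sum_add_distrib,
    ← Finset.mul_sum, ← EuclideanSpace.real_norm_sq_eq]
  simp only [Finset.sum_const, Finset.card_univ, Fintype.card_fin, nsmul_eq_mul]
  ring

theorem sum_pder_norm_rpow_mul_pder_comp_norm_sq {φ φ' G : ℝ → ℝ} {G' a : ℝ}
    {x : EuclideanSpace ℝ (Fin n)} (hx : x ≠ 0)
    (hφ : ∀ t, 0 < t → HasDerivAt φ (φ' t) t) (hG : ∀ t, 0 < t → G t = 2 * t ^ (-a) * φ' t)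
    (hG' : HasDerivAt G G' (‖x‖ ^ 2)) :
    ∑ i, pder i (fun y => ‖y‖ ^ (-(2 * a)) * pder i (fun z => φ (‖z‖ ^ 2)) y) x =
      n * G (‖x‖ ^ 2) + 2 * ‖x‖ ^ 2 * G' := by
  rw [← sum_pder_comp_norm_sq_mul_apply hG']
  refine Finset.sum_congr rfl fun i _ => Filter.EventuallyEq.pder_eq ?_ i
  filter_upwards [eventually_ne_nhds hx] with y hy
  have hy2 : 0 < ‖y‖ ^ 2 := by positivity
  rw [pder_comp_norm_sq (hφ _ hy2), hG _ hy2, norm_rpow_eq_norm_sq_rpow]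
  ring_nf

end RadialCalculus

section RadialProfile

variable {t : ℝ}

theorem hasDerivAt_one_add_rpow_rpow {e k : ℝ} (ht : 0 < t) :
    HasDerivAt (fun t => (1 + t ^ e) ^ k) (k * e * t ^ (e - 1) * (1 + t ^ e) ^ (k - 1)) t := by
  have hT : 0 < 1 + t ^ e := by positivity
  refine (((Real.hasDerivAt_rpow_const (p := e) (Or.inl ht.ne')).const_add 1).rpow_const
    (p := k) (Or.inl hT.ne')).congr_deriv ?_
  ring

theorem hasDerivAt_rpow_mul_one_add_rpow_rpow {m e k : ℝ} (ht : 0 < t) :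
    HasDerivAt (fun t => t ^ m * (1 + t ^ e) ^ k)
      (t ^ (m - 1) * (1 + t ^ e) ^ (k - 1) * (m * (1 + t ^ e) + k * e * t ^ e)) t := by
  have hT : 0 < 1 + t ^ e := by positivity
  refine ((Real.hasDerivAt_rpow_const (p := m) (Or.inl ht.ne')).mul
    (hasDerivAt_one_add_rpow_rpow (e := e) (k := k) ht)).congr_deriv ?_
  rw [Real.rpow_sub_one ht.ne' m, Real.rpow_sub_one ht.ne' e, Real.rpow_sub_one hT.ne' k]
  field_simp

theorem ckn_flux_identity {n a d p e q : ℝ} (hp : p ≠ 2) (hd : d = (n - 2) / 2 - a)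
    (he : e = (p - 2) * d / 2) (hq : q = -2 / (p - 2)) (ht : 0 < t) :
    -(n * (2 * q * e * (t ^ (e - 1 - a) * (1 + t ^ e) ^ (q - 1))) +
        2 * t * (2 * q * e * (t ^ (e - 1 - a - 1) * (1 + t ^ e) ^ (q - 1 - 1) *
          ((e - 1 - a) * (1 + t ^ e) + (q - 1) * e * t ^ e)))) =
      2 * p * d ^ 2 * t ^ (e - 1 - a) * ((1 + t ^ e) ^ q) ^ (p - 1) := by
  have hp2 : p - 2 ≠ 0 := sub_ne_zero.mpr hp
  have hT : 0 < 1 + t ^ e := by positivity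
  have hpow : ((1 + t ^ e) ^ q) ^ (p - 1) = (1 + t ^ e) ^ (q - 1 - 1) := by
    rw [← Real.rpow_mul hT.le, hq]
    congr 1
    field_simp
    ring
  rw [hpow, Real.rpow_sub_one ht.ne', Real.rpow_sub_one hT.ne' (q - 1)]
  generalize t ^ (e - 1 - a) = X
  generalize (1 + t ^ e) ^ (q - 1) = Y
  generalize t ^ e = u at hT ⊢
  subst hd he hq
  field_simp
  ring

end RadialProfile

theorem radial_extremal_solves_CKN_EulerLagrange_general (n : ℕ) (a p : ℝ)
    (ha : a < ((n : ℝ) - 2) / 2) (hp : 2 < p)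
    (b : ℝ) (hb : b = a + 1 - n * (1 / 2 - 1 / p))
    (v : EuclideanSpace ℝ (Fin n) → ℝ)
    (hv : v = fun x => (1 + ‖x‖ ^ ((p - 2) * (((n : ℝ) - 2) / 2 - a))) ^ (-2 / (p - 2))) :
    (∀ x, 0 < v x) ∧
    (∀ x y : EuclideanSpace ℝ (Fin n), ‖x‖ = ‖y‖ → v x = v y) ∧
    ∃ C : ℝ, 0 < C ∧ ∀ x : EuclideanSpace ℝ (Fin n), x ≠ 0 →
      -(∑ i : Fin n, pder i (fun y => ‖y‖ ^ (-(2 * a)) * pder i v y) x) =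
        C * ‖x‖ ^ (-(b * p)) * v x ^ (p - 1) := by
  set d : ℝ := ((n : ℝ) - 2) / 2 - a with hd
  set e : ℝ := (p - 2) * d / 2 with he
  set q : ℝ := -2 / (p - 2) with hq
  have hd0 : 0 < d := sub_pos.mpr ha
  have hv' : v = fun y => (1 + (‖y‖ ^ 2) ^ e) ^ q := by
    rw [hv]
    funext y
    rw [norm_rpow_eq_norm_sq_rpow]
  refine ⟨fun x => by rw [hv]; positivity, fun x y hxy => by simp only [hv, hxy],
    2 * p * d ^ 2, by positivity, fun x hx => ?_⟩
  have ht : 0 < ‖x‖ ^ 2 := by positivity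
  have hflux := (hasDerivAt_rpow_mul_one_add_rpow_rpow (m := e - 1 - a) (e := e) (k := q - 1)
    ht).const_mul (2 * q * e)
  have hweight : -(b * p) / 2 = e - 1 - a := by
    rw [hb, he, hd]
    field_simp
    ring
  rw [hv', sum_pder_norm_rpow_mul_pder_comp_norm_sq (φ := fun t => (1 + t ^ e) ^ q) hx
    (fun t ht => hasDerivAt_one_add_rpow_rpow ht) (fun t ht => ?_) hflux,
    norm_rpow_eq_norm_sq_rpow x, hweight]
  · exact ckn_flux_identity (by linarith) hd he hq ht
  · rw [show e - 1 - a = -a + (e - 1) by ring, Real.rpow_add ht]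
    ring

/-- The radial profile `v*(x) = (1 + |x|^{(p−2)(a_c−a)})^{−2/(p−2)}`, `a_c = (n−2)/2`,
is a positive radially symmetric solution of
`−div(|x|^{−2a} ∇u) = C |x|^{−bp} u^{p−1}` on `ℝⁿ ∖ {0}` for a suitable `C > 0`, where
`b = a + 1 − n(1/2 − 1/p)`. -/
theorem radial_extremal_solves_CKN_EulerLagrange (n : ℕ) (hn : 3 ≤ n) (a p : ℝ)
    (ha : a < ((n : ℝ) - 2) / 2) (hp : 2 < p) (hp' : p ≤ 2 * n / ((n : ℝ) - 2))
    (b : ℝ) (hb : b = a + 1 - n * (1 / 2 - 1 / p))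
    (v : EuclideanSpace ℝ (Fin n) → ℝ)
    (hv : v = fun x => (1 + ‖x‖ ^ ((p - 2) * (((n : ℝ) - 2) / 2 - a))) ^ (-2 / (p - 2))) :
    (∀ x, 0 < v x) ∧
    (∀ x y : EuclideanSpace ℝ (Fin n), ‖x‖ = ‖y‖ → v x = v y) ∧
    ∃ C : ℝ, 0 < C ∧ ∀ x : EuclideanSpace ℝ (Fin n), x ≠ 0 →
      -(∑ i : Fin n, pder i (fun y => ‖y‖ ^ (-(2 * a)) * pder i v y) x) =
        C * ‖x‖ ^ (-(b * p)) * v x ^ (p - 1) :=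
  radial_extremal_solves_CKN_EulerLagrange_general n a p ha hp b hb v hv
end

section
/- Parabolic Hausdorff content bound via covering: let S ⊂ ℝ × ℝ³ and suppose that for every (t,x) ∈ S, limsup_{r→0⁺} (1/r) ∫∫_{Q_r(t,x)} g dy dτ ≥ ε for some ε > 0 and g ∈ L¹(ℝ × ℝ³), g ≥ 0. Then the one-dimensional parabolic Hausdorff measure of S is zero: 𝒫¹(S) = 0. -/
/-!
Let `ν = g dτ dy`, a finite measure absolutely continuous with respect to Lebesgue measure. Every
point of `S` is the centre of arbitrarily small cylinders `Q_r` with `ν(Q_r) ≥ ε r / 2`. Given an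
open `U ⊇ S`, the Vitali lemma selects disjoint such cylinders inside `U` whose threefold
enlargements cover `S`, so covers of `S` by small cylinders have total radius at most
`(6 / ε) ν(U)`. Taking `U` to be the whole space and using `|Q_r| ≲ δ⁴ r` for `r ≤ δ` shows that
`S` is Lebesgue-null; hence `ν(S) = 0`, and by outer regularity `ν(U)` can be made arbitrarily
small.
-/

open MeasureTheory Filter

noncomputable section

abbrev E3 := EuclideanSpace ℝ (Fin 3)

/-- The parabolic cylinder `Q_r(t,x) = {(τ,y) : |τ − t| < r², |y − x| < r}` in `ℝ × ℝ³`. -/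
def pCyl (r t : ℝ) (x : E3) : Set (ℝ × E3) :=
  {q | |q.1 - t| < r ^ 2 ∧ ‖q.2 - x‖ < r}

/-- The one-dimensional parabolic Hausdorff measure `𝒫¹(S)`, defined via countable
coverings by parabolic cylinders of radii at most `δ`, with gauge `r`, letting `δ → 0`. -/
def parabolicHausdorff1 (S : Set (ℝ × E3)) : ENNReal :=
  ⨆ (δ : ℝ) (_ : 0 < δ),
    ⨅ (c : ℕ → ℝ × E3) (ρ : ℕ → ℝ) (_ : ∀ i, 0 < ρ i ∧ ρ i ≤ δ)
      (_ : S ⊆ ⋃ i, pCyl (ρ i) (c i).1 (c i).2),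
      ∑' i, ENNReal.ofReal (ρ i)

open Set Topology

def parabolicContent (δ : ℝ) (S : Set (ℝ × E3)) : ENNReal :=
  ⨅ (c : ℕ → ℝ × E3) (ρ : ℕ → ℝ) (_ : ∀ i, 0 < ρ i ∧ ρ i ≤ δ)
    (_ : S ⊆ ⋃ i, pCyl (ρ i) (c i).1 (c i).2), ∑' i, ENNReal.ofReal (ρ i)

lemma parabolicHausdorff1_eq_iSup (S : Set (ℝ × E3)) :
    parabolicHausdorff1 S = ⨆ (δ : ℝ) (_ : 0 < δ), parabolicContent δ S :=
  rfl

/-- A countable cover is padded to an `ℕ`-indexed one by cylinders of arbitrarily small total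
radius. -/
lemma parabolicContent_le_tsum {ι : Type*} [Countable ι] {δ : ℝ} (hδ : 0 < δ)
    {S : Set (ℝ × E3)} (c : ι → ℝ × E3) (ρ : ι → ℝ) (hρ : ∀ i, 0 < ρ i ∧ ρ i ≤ δ)
    (hS : S ⊆ ⋃ i, pCyl (ρ i) (c i).1 (c i).2) :
    parabolicContent δ S ≤ ∑' i, ENNReal.ofReal (ρ i) := by
  refine ENNReal.le_of_forall_pos_le_add fun η hη _ => ?_
  obtain ⟨η', hη'0, hη'⟩ :=
    ENNReal.exists_pos_sum_of_countable (ENNReal.coe_ne_zero.2 hη.ne') ℕ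
  obtain ⟨e⟩ := nonempty_equiv_of_countable (α := ℕ) (β := ι ⊕ ℕ)
  let c' : ι ⊕ ℕ → ℝ × E3 := Sum.elim c fun _ => 0
  let ρ' : ι ⊕ ℕ → ℝ := Sum.elim ρ fun n => min δ (η' n)
  have hρ' : ∀ j, 0 < ρ' j ∧ ρ' j ≤ δ := by
    rintro (i | n)
    · exact hρ i
    · exact ⟨lt_min hδ (hη'0 n), min_le_left _ _⟩
  have hcover : S ⊆ ⋃ n, pCyl (ρ' (e n)) (c' (e n)).1 (c' (e n)).2 := by
    refine hS.trans (iUnion_subset fun i => ?_)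
    exact subset_iUnion_of_subset (e.symm (.inl i)) (by simp [c', ρ'])
  calc parabolicContent δ S ≤ ∑' n, ENNReal.ofReal (ρ' (e n)) :=
        iInf₂_le_of_le (c' ∘ e) (ρ' ∘ e) (iInf₂_le_of_le (fun n => hρ' (e n)) hcover le_rfl)
    _ = ∑' i, ENNReal.ofReal (ρ i) + ∑' n, ENNReal.ofReal (min δ (η' n)) := by
        rw [e.tsum_eq (fun j => ENNReal.ofReal (ρ' j)),
          ENNReal.summable.tsum_sum ENNReal.summable]
        rfl
    _ ≤ ∑' i, ENNReal.ofReal (ρ i) + η := by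
        gcongr
        refine (ENNReal.tsum_le_tsum fun n => ?_).trans hη'.le
        rw [← ENNReal.ofReal_coe_nnreal]
        exact ENNReal.ofReal_le_ofReal (min_le_right _ _)

lemma pCyl_eq_prod (r t : ℝ) (x : E3) :
    pCyl r t x = Ioo (t - r ^ 2) (t + r ^ 2) ×ˢ Metric.ball x r := by
  ext ⟨τ, y⟩
  simp only [pCyl, mem_ofPred_eq, mem_prod, mem_Ioo, Metric.mem_ball, dist_eq_norm,
    abs_sub_lt_iff]
  constructor <;> rintro ⟨⟨h₁, h₂⟩, h₃⟩ <;> exact ⟨⟨by linarith, by linarith⟩, h₃⟩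

lemma isOpen_pCyl (r t : ℝ) (x : E3) : IsOpen (pCyl r t x) := by
  rw [pCyl_eq_prod]
  exact isOpen_Ioo.prod Metric.isOpen_ball

lemma mem_pCyl_self {r : ℝ} (hr : 0 < r) (t : ℝ) (x : E3) : (t, x) ∈ pCyl r t x := by
  simp [pCyl, hr]

lemma volume_pCyl {r : ℝ} (hr : 0 ≤ r) (t : ℝ) (x : E3) :
    volume (pCyl r t x) = ENNReal.ofReal (2 * r ^ 5) * volume (Metric.ball (0 : E3) 1) := by
  rw [pCyl_eq_prod, Measure.volume_eq_prod, Measure.prod_prod, Real.volume_Ioo,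
    Measure.addHaar_ball volume x hr, finrank_euclideanSpace_fin,
    show t + r ^ 2 - (t - r ^ 2) = 2 * r ^ 2 by ring, ← mul_assoc,
    ← ENNReal.ofReal_mul (by positivity)]
  ring_nf

lemma pCyl_subset_ball {r : ℝ} (hr : r ≤ 1) (t : ℝ) (x : E3) :
    pCyl r t x ⊆ Metric.ball (t, x) r := by
  rintro ⟨τ, y⟩ ⟨hτ, hy⟩
  have : r ^ 2 ≤ r := by nlinarith [(norm_nonneg _).trans_lt hy]
  rw [Metric.mem_ball, Prod.dist_eq, Real.dist_eq, dist_eq_norm]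
  exact max_lt (hτ.trans_le this) hy

lemma eventually_pCyl_subset {p : ℝ × E3} {U : Set (ℝ × E3)} (hU : U ∈ 𝓝 p) :
    ∀ᶠ r in 𝓝[>] (0 : ℝ), pCyl r p.1 p.2 ⊆ U := by
  obtain ⟨w, hw, hwU⟩ := Metric.mem_nhds_iff.1 hU
  filter_upwards [Ioo_mem_nhdsGT (lt_min hw one_pos)] with r hr
  exact (pCyl_subset_ball (hr.2.trans_le (min_le_right _ _)).le _ _).trans
    ((Metric.ball_subset_ball (hr.2.trans_le (min_le_left _ _)).le).trans hwU)

lemma mem_pCyl_three_mul_of_inter_nonempty {p q : ℝ × E3} {r r' : ℝ}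
    (h : (pCyl r p.1 p.2 ∩ pCyl r' q.1 q.2).Nonempty) (hr : r ≤ 2 * r') :
    p ∈ pCyl (3 * r') q.1 q.2 := by
  obtain ⟨z, ⟨hz₁, hz₂⟩, hz₁', hz₂'⟩ := h
  have hr0 : 0 ≤ r := (norm_nonneg _).trans hz₂.le
  constructor
  · rw [abs_sub_comm] at hz₁
    calc |p.1 - q.1| ≤ |p.1 - z.1| + |z.1 - q.1| := abs_sub_le ..
      _ < r ^ 2 + r' ^ 2 := add_lt_add hz₁ hz₁'
      _ ≤ (3 * r') ^ 2 := by nlinarith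
  · rw [norm_sub_rev] at hz₂
    calc ‖p.2 - q.2‖ ≤ ‖p.2 - z.2‖ + ‖z.2 - q.2‖ := norm_sub_le_norm_sub_add_norm_sub ..
      _ < r + r' := add_lt_add hz₂ hz₂'
      _ ≤ 3 * r' := by linarith

lemma volume_le_mul_parabolicContent {δ : ℝ} (hδ : 0 < δ) (S : Set (ℝ × E3)) :
    volume S ≤ ENNReal.ofReal (2 * δ ^ 4) * volume (Metric.ball (0 : E3) 1) *
      parabolicContent δ S := by
  have h0 : ENNReal.ofReal (2 * δ ^ 4) * volume (Metric.ball (0 : E3) 1) ≠ 0 :=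
    mul_ne_zero (by positivity) (Metric.measure_ball_pos _ _ one_pos).ne'
  have htop : ENNReal.ofReal (2 * δ ^ 4) * volume (Metric.ball (0 : E3) 1) ≠ ⊤ :=
    ENNReal.mul_ne_top ENNReal.ofReal_ne_top measure_ball_lt_top.ne
  simp only [parabolicContent, ENNReal.mul_iInf_of_ne h0 htop]
  refine le_iInf₂ fun c ρ => le_iInf₂ fun hρ hS => ?_
  calc volume S ≤ ∑' i, volume (pCyl (ρ i) (c i).1 (c i).2) :=
        (measure_mono hS).trans (measure_iUnion_le _)
    _ ≤ ∑' i, ENNReal.ofReal (2 * δ ^ 4) * volume (Metric.ball (0 : E3) 1) *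
          ENNReal.ofReal (ρ i) := by
        refine ENNReal.tsum_le_tsum fun i => ?_
        rw [volume_pCyl (hρ i).1.le, mul_right_comm, ← ENNReal.ofReal_mul (by positivity)]
        refine mul_le_mul_left (ENNReal.ofReal_le_ofReal ?_) _
        nlinarith [pow_le_pow_left₀ (hρ i).1.le (hρ i).2 4, (hρ i).1]
    _ = _ := ENNReal.tsum_mul_left

lemma volume_eq_zero_of_parabolicContent_le {S : Set (ℝ × E3)} {K : ENNReal} (hK : K ≠ ⊤)
    (hS : ∀ δ > 0, parabolicContent δ S ≤ K) : volume S = 0 := by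
  have hlim : Tendsto (fun δ : ℝ => ENNReal.ofReal (2 * δ ^ 4) *
      volume (Metric.ball (0 : E3) 1) * K) (𝓝[>] 0) (𝓝 0) := by
    have hpow : Tendsto (fun δ : ℝ => 2 * δ ^ 4) (𝓝[>] 0) (𝓝 0) :=
      ((continuous_const.mul (continuous_pow 4)).tendsto' 0 0 (by simp)).mono_left
        nhdsWithin_le_nhds
    simpa only [ENNReal.ofReal_zero, zero_mul] using ENNReal.Tendsto.mul_const (ENNReal.Tendsto.mul_const
      (ENNReal.tendsto_ofReal hpow)
      (Or.inr (measure_ball_lt_top (μ := volume) (x := (0 : E3)) (r := 1)).ne)) (Or.inr hK)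
  refine nonpos_iff_eq_zero.1 (ge_of_tendsto hlim ?_)
  filter_upwards [self_mem_nhdsWithin] with δ hδ
  exact (volume_le_mul_parabolicContent hδ S).trans (by gcongr; exact hS δ hδ)

lemma parabolicContent_le_mul_measure (μ : Measure (ℝ × E3)) {c δ : ℝ} (hc : 0 < c)
    (hδ : 0 < δ) {S U : Set (ℝ × E3)} (hU : IsOpen U) (hSU : S ⊆ U)
    (hS : ∀ p ∈ S, ∃ᶠ r in 𝓝[>] (0 : ℝ), ENNReal.ofReal (c * r) ≤ μ (pCyl r p.1 p.2)) :
    parabolicContent δ S ≤ ENNReal.ofReal (3 / c) * μ U := by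
  let Q : (ℝ × E3) × ℝ → Set (ℝ × E3) := fun a => pCyl a.2 a.1.1 a.1.2
  let t : Set ((ℝ × E3) × ℝ) :=
    {a | a.1 ∈ S ∧ 0 < a.2 ∧ a.2 ≤ δ / 3 ∧ Q a ⊆ U ∧ ENNReal.ofReal (c * a.2) ≤ μ (Q a)}
  have ht : ∀ p ∈ S, ∃ r, (p, r) ∈ t := by
    intro p hp
    have hsmall : ∀ᶠ r in 𝓝[>] (0 : ℝ), 0 < r ∧ r ≤ δ / 3 ∧ pCyl r p.1 p.2 ⊆ U := by
      filter_upwards [self_mem_nhdsWithin, Ioc_mem_nhdsGT (by positivity : (0 : ℝ) < δ / 3),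
        eventually_pCyl_subset (hU.mem_nhds (hSU hp))] with r h₀ hδr hrU
      exact ⟨h₀, hδr.2, hrU⟩
    obtain ⟨r, hmass, h₀, hδr, hrU⟩ := ((hS p hp).and_eventually hsmall).exists
    exact ⟨r, hp, h₀, hδr, hrU, hmass⟩
  obtain ⟨u, hut, hdisj, hcov⟩ := Vitali.exists_disjoint_subfamily_covering_enlargement Q t
    Prod.snd 2 one_lt_two (fun a ha => ha.2.1.le) (δ / 3) (fun a ha => ha.2.2.1)
    (fun a ha => ⟨a.1, mem_pCyl_self ha.2.1 _ _⟩)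
  have : Countable u := (hdisj.countable_of_isOpen (fun _ _ => isOpen_pCyl _ _ _)
    (fun a ha => ⟨a.1, mem_pCyl_self (hut ha).2.1 _ _⟩)).to_subtype
  calc parabolicContent δ S ≤ ∑' b : u, ENNReal.ofReal (3 * b.1.2) := by
        refine parabolicContent_le_tsum hδ (fun b : u => b.1.1) (fun b : u => 3 * b.1.2)
          (fun b => ⟨by linarith [(hut b.2).2.1], by linarith [(hut b.2).2.2.1]⟩) ?_
        intro p hp
        obtain ⟨r, hr⟩ := ht p hp
        obtain ⟨b, hb, hinter, hrb⟩ := hcov _ hr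
        exact mem_iUnion.2 ⟨⟨b, hb⟩, mem_pCyl_three_mul_of_inter_nonempty hinter hrb⟩
    _ = ENNReal.ofReal (3 / c) * ∑' b : u, ENNReal.ofReal (c * b.1.2) := by
        rw [← ENNReal.tsum_mul_left]
        congr with b
        rw [← ENNReal.ofReal_mul (by positivity)]
        field_simp
    _ ≤ ENNReal.ofReal (3 / c) * ∑' b : u, μ (Q b) := by
        gcongr with b
        exact (hut b.2).2.2.2.2
    _ ≤ ENNReal.ofReal (3 / c) * μ U := by
        gcongr
        exact (tsum_meas_le_meas_iUnion_of_disjoint μ (fun _ => (isOpen_pCyl _ _ _).measurableSet)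
          (hdisj.subtype _ _)).trans (measure_mono (iUnion_subset fun b => (hut b.2).2.2.2.1))

lemma parabolicHausdorff1_eq_zero_of_frequently (ν : Measure (ℝ × E3)) [IsFiniteMeasure ν]
    (hν : ν ≪ volume) {c : ℝ} (hc : 0 < c) {S : Set (ℝ × E3)}
    (hS : ∀ p ∈ S, ∃ᶠ r in 𝓝[>] (0 : ℝ), ENNReal.ofReal (c * r) ≤ ν (pCyl r p.1 p.2)) :
    parabolicHausdorff1 S = 0 := by
  have hνS : ν S = 0 := hν <| volume_eq_zero_of_parabolicContent_le
    (ENNReal.mul_ne_top ENNReal.ofReal_ne_top (measure_ne_top ν univ)) fun δ hδ =>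
      parabolicContent_le_mul_measure ν hc hδ isOpen_univ (subset_univ S) hS
  rw [parabolicHausdorff1_eq_iSup]
  refine nonpos_iff_eq_zero.1 (iSup₂_le fun δ hδ => ENNReal.le_of_forall_pos_le_add
    fun η hη _ => ?_)
  obtain ⟨η', hη'0, hη'⟩ := ENNReal.exists_pos_mul_lt (a := ENNReal.ofReal (3 / c))
    ENNReal.ofReal_ne_top (ENNReal.coe_ne_zero.2 hη.ne')
  obtain ⟨U, hSU, hU, hνU⟩ := Set.exists_isOpen_lt_of_lt S η' (hνS ▸ hη'0)
  calc parabolicContent δ S ≤ ENNReal.ofReal (3 / c) * ν U :=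
        parabolicContent_le_mul_measure ν hc hδ hU hSU hS
    _ ≤ 0 + η := by
        rw [zero_add, mul_comm]
        exact (mul_le_mul_left hνU.le _).trans hη'.le

lemma frequently_mul_le_of_lt_limsup {F : ℝ → ℝ} {c : ℝ} (hF : ∀ r, 0 ≤ F r)
    (h : c < limsup (fun r => 1 / r * F r) (𝓝[>] 0)) : ∃ᶠ r in 𝓝[>] 0, c * r ≤ F r := by
  have hcobdd : (𝓝[>] (0 : ℝ)).IsCoboundedUnder (· ≤ ·) fun r => 1 / r * F r := by
    refine isCoboundedUnder_le_of_eventually_le _ (x := 0) ?_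
    filter_upwards [self_mem_nhdsWithin] with r hr
    exact mul_nonneg (one_div_pos.2 hr).le (hF r)
  refine ((frequently_lt_of_lt_limsup hcobdd h).and_eventually self_mem_nhdsWithin).mono ?_
  rintro r ⟨hlt, hr⟩
  rw [one_div_mul_eq_div, lt_div_iff₀ hr] at hlt
  exact hlt.le

/-- Covering step in the Caffarelli–Kohn–Nirenberg partial regularity theorem: if `g ≥ 0`
is integrable on `ℝ × ℝ³` and every point `(t,x)` of `S` satisfies
`limsup_{r→0⁺} (1/r)∫∫_{Q_r(t,x)} g ≥ ε` for a fixed `ε > 0`, then `𝒫¹(S) = 0`. -/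
theorem parabolic_hausdorff_covering (g : ℝ × E3 → ℝ) (hg : Integrable g)
    (hg0 : ∀ q, 0 ≤ g q) (ε : ℝ) (hε : 0 < ε) (S : Set (ℝ × E3))
    (hS : ∀ p ∈ S,
      ε ≤ limsup (fun r : ℝ => (1 / r) * ∫ q in pCyl r p.1 p.2, g q) (nhdsWithin 0 (Set.Ioi 0))) :
    parabolicHausdorff1 S = 0 := by
  let ν := volume.withDensity fun q => ENNReal.ofReal (g q)
  have : IsFiniteMeasure ν := isFiniteMeasure_withDensity_ofReal hg.2
  have hν : ∀ r t x, ν (pCyl r t x) = ENNReal.ofReal (∫ q in pCyl r t x, g q) := fun r t x => by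
    rw [withDensity_apply _ (isOpen_pCyl r t x).measurableSet,
      ofReal_integral_eq_lintegral_ofReal hg.integrableOn (Eventually.of_forall hg0)]
  refine parabolicHausdorff1_eq_zero_of_frequently ν (withDensity_absolutelyContinuous _ _)
    (half_pos hε) fun p hp => ?_
  refine (frequently_mul_le_of_lt_limsup (fun r => integral_nonneg hg0)
    ((half_lt_self hε).trans_le (hS p hp))).mono fun r hr => ?_
  rw [hν]
  exact ENNReal.ofReal_le_ofReal hr

end
end
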